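/- Let (G, L, c, r, e_r) be a rooted WRAP instance and F⃗ a non-shortenable directed WRAP solution. Then for every 2-cut C ∈ C_G there is exactly one directed link ℓ⃗ ∈ F⃗ that is responsible for C; equivalently, the sets R_{F⃗}(ℓ⃗) for ℓ⃗ ∈ F⃗ partition C_G. -/

import Mathlib

/-!
Common definitions for the Weighted Ring Augmentation Problem (WRAP).

A rooted WRAP instance `(G, L, c, r, e_r)` has a ring graph `G` whose
vertices we identify with `Fin n`, numbered `r = 0, 1, …, n-1` in the order
in which they appear along the path `(V, E \ {e_r})` starting at the root
`r = 0`.  Vertex `i` is to the left of `j` iff `i < j`.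
-/

/-- An undirected link: an unordered pair of distinct vertices of the ring,
recorded via its left endpoint `lo` and its right endpoint `hi`. -/
structure Link (n : ℕ) where
  lo : Fin n
  hi : Fin n
  lo_lt_hi : lo < hi

instance {n : ℕ} : DecidableEq (Link n) := fun a b =>
  decidable_of_iff (a.lo = b.lo ∧ a.hi = b.hi) (by cases a; cases b; simp)

/-- A directed link: an ordered pair of distinct vertices. -/
structure DLink (n : ℕ) where
  tail : Fin n
  head : Fin n
  ne : tail ≠ head

instance {n : ℕ} : DecidableEq (DLink n) := fun a b =>
  decidable_of_iff (a.tail = b.tail ∧ a.head = b.head) (by cases a; cases b; simp)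

variable {n : ℕ}

/-- The underlying undirected link of a directed link. -/
def DLink.toLink (d : DLink n) : Link n :=
  ⟨min d.tail d.head, max d.tail d.head, min_lt_max.mpr d.ne⟩

/-- `ℓ` is incident to `v`. -/
def Link.Incident (ℓ : Link n) (v : Fin n) : Prop := ℓ.lo = v ∨ ℓ.hi = v

/-- The 2-cuts `C_G` of the ring: the nonempty intervals of consecutive
vertices along the path `(V, E \ {e_r})` that do not contain the root `0`. -/
def IsCut [NeZero n] (C : Finset (Fin n)) : Prop :=
  ∃ a b : Fin n, 0 < a ∧ a ≤ b ∧ C = Finset.Icc a b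

/-- `ℓ` has exactly one endpoint in `C`. -/
def crossesCut (ℓ : Link n) (C : Finset (Fin n)) : Prop :=
  (ℓ.lo ∈ C ∧ ℓ.hi ∉ C) ∨ (ℓ.lo ∉ C ∧ ℓ.hi ∈ C)

instance (ℓ : Link n) (C : Finset (Fin n)) : Decidable (crossesCut ℓ C) := by
  unfold crossesCut; infer_instance

/-- `δ_K(C)`: the links of `K` with exactly one endpoint in `C`. -/
def cutLinks (K : Finset (Link n)) (C : Finset (Fin n)) : Finset (Link n) :=
  K.filter (fun ℓ => crossesCut ℓ C)

/-- An (undirected) WRAP solution: every 2-cut is covered by some link. -/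
def IsSolution [NeZero n] (S : Finset (Link n)) : Prop :=
  ∀ C : Finset (Fin n), IsCut C → (cutLinks S C).Nonempty

/-- A directed link covers a 2-cut if it enters it. -/
def DCovers (d : DLink n) (C : Finset (Fin n)) : Prop := d.tail ∉ C ∧ d.head ∈ C

/-- A directed WRAP solution: every 2-cut is entered by some directed link. -/
def IsDirSolution [NeZero n] (F : Finset (DLink n)) : Prop :=
  ∀ C : Finset (Fin n), IsCut C → ∃ d ∈ F, DCovers d C

/-- `d'` is a shortening of `d`: same head, and the tail of `d'` lies on the
unique path between the endpoints of `d` in `(V, E \ {e_r})`. -/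
def IsShortening (d' d : DLink n) : Prop :=
  d'.head = d.head ∧ min d.tail d.head ≤ d'.tail ∧ d'.tail ≤ max d.tail d.head

/-- A non-shortenable directed WRAP solution: deleting any link, or replacing
any link by a strict shortening of it, destroys feasibility. -/
def NonShortenable [NeZero n] (F : Finset (DLink n)) : Prop :=
  IsDirSolution F ∧
    (∀ d ∈ F, ¬ IsDirSolution (F.erase d)) ∧
    (∀ d ∈ F, ∀ d' : DLink n, IsShortening d' d → d' ≠ d →
      ¬ IsDirSolution (insert d' (F.erase d)))

/-- `d` is a shadow of the undirected link `ℓ`: a shortening of one of the two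
orientations of `ℓ`. -/
def IsShadow (d : DLink n) (ℓ : Link n) : Prop :=
  (d.head = ℓ.lo ∨ d.head = ℓ.hi) ∧ ℓ.lo ≤ d.tail ∧ d.tail ≤ ℓ.hi

/-- `u` is a descendant of `v` in `(V, F)` (every vertex is a descendant of
itself). -/
def Descend (F : Finset (DLink n)) (v u : Fin n) : Prop :=
  Relation.ReflTransGen (fun a b => ∃ d ∈ F, d.tail = a ∧ d.head = b) v u

/-- `u` is `v`-good: not a descendant of `v` in `(V, F)`. -/
def VGood (F : Finset (DLink n)) (v u : Fin n) : Prop := ¬ Descend F v u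

/-- `w` is the least common ancestor of the vertex set `U` in `(V, F)`. -/
def IsLCA (F : Finset (DLink n)) (w : Fin n) (U : Set (Fin n)) : Prop :=
  (∀ u ∈ U, Descend F w u) ∧ ∀ x : Fin n, (∀ u ∈ U, Descend F x u) → Descend F x w

/-- `d = (u,v)` is responsible for the 2-cut `C`: it covers `C` and no
directed link of `F` on the `r`–`u` path in the arborescence `(V, F)`
(i.e. no link of `F` whose head is an ancestor of `u`) covers `C`. -/
def Responsible [NeZero n] (F : Finset (DLink n)) (d : DLink n)
    (C : Finset (Fin n)) : Prop :=
  IsCut C ∧ DCovers d C ∧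
    ∀ d' ∈ F, Descend F d'.head d.tail → ¬ DCovers d' C

/-- `Drop_F(K)`: directed links of `F` all of whose responsible cuts
are covered by `K`. -/
def Drop [NeZero n] (F : Finset (DLink n)) (K : Finset (Link n)) : Set (DLink n) :=
  {d | d ∈ F ∧ ∀ C : Finset (Fin n), Responsible F d C → (cutLinks K C).Nonempty}

/-- Two links are crossing: their endpoints interleave along the ring. -/
def Crossing (ℓ f : Link n) : Prop :=
  (ℓ.lo < f.lo ∧ f.lo < ℓ.hi ∧ ℓ.hi < f.hi) ∨
  (f.lo < ℓ.lo ∧ ℓ.lo < f.hi ∧ f.hi < ℓ.hi)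

/-- Two links intersect: they share an endpoint or cross. -/
def Intersects (ℓ f : Link n) : Prop :=
  (ℓ.lo = f.lo ∨ ℓ.lo = f.hi ∨ ℓ.hi = f.lo ∨ ℓ.hi = f.hi) ∨ Crossing ℓ f

/-- The vertex `u` is connected to the vertex `w` in the link intersection
graph `H[K]`: there is a path in `H[K]` from a link incident to `u` to a link
incident to `w`. -/
def ConnVert (K : Finset (Link n)) (u w : Fin n) : Prop :=
  ∃ ℓ ∈ K, ∃ f ∈ K, ℓ.Incident u ∧ f.Incident w ∧
    Relation.ReflTransGen (fun a b => a ∈ K ∧ b ∈ K ∧ Intersects a b) ℓ f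

/-- The link intersection graph `H[S]` is connected. -/
def ConnLinkSet (S : Finset (Link n)) : Prop :=
  ∀ ℓ ∈ S, ∀ f ∈ S,
    Relation.ReflTransGen (fun a b => a ∈ S ∧ b ∈ S ∧ Intersects a b) ℓ f

/-- `V(S)`: the vertices incident to a link of `S`. -/
def linkVerts (S : Finset (Link n)) : Set (Fin n) := {v | ∃ ℓ ∈ S, ℓ.Incident v}

/-- A festoon order: the links (listed as `f 0, f 1, …`) form a path in the
link intersection graph visited in this order, with both left endpoints and
right endpoints strictly increasing. -/
def IsFestoonSeq {p : ℕ} (f : Fin p → Link n) : Prop :=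
  (∀ i j : Fin p, i < j → (f i).lo < (f j).lo ∧ (f i).hi < (f j).hi) ∧
  (∀ i j : Fin p, (i : ℕ) + 1 = (j : ℕ) → Intersects (f i) (f j)) ∧
  (∀ i j : Fin p, (i : ℕ) + 1 < (j : ℕ) → ¬ Intersects (f i) (f j))

/-- A festoon: a nonempty link set admitting a festoon order. -/
def IsFestoon (X : Finset (Link n)) : Prop :=
  ∃ p : ℕ, 0 < p ∧ ∃ f : Fin p → Link n,
    IsFestoonSeq f ∧ X = Finset.image f Finset.univ

/-- The festoon interval `I_X`: the interval from the leftmost endpoint of a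
link of `X` to the rightmost endpoint of a link of `X`. -/
def festoonIval (X : Finset (Link n)) : Set (Fin n) :=
  {w | (∃ ℓ ∈ X, ℓ.lo ≤ w) ∧ ∃ ℓ ∈ X, w ≤ ℓ.hi}

/-- Two festoons are tangled: some link of one intersects some link of the
other. -/
def Tangled (X Y : Finset (Link n)) : Prop :=
  ∃ ℓ ∈ X, ∃ f ∈ Y, Intersects ℓ f

/-- A laminar family of vertex sets: any two members are nested or disjoint. -/
def Laminar (𝓛 : Set (Finset (Fin n))) : Prop :=
  ∀ A ∈ 𝓛, ∀ B ∈ 𝓛, A ⊆ B ∨ B ⊆ A ∨ Disjoint A B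

/-- An inclusion-wise maximal laminar subfamily of `C_G`. -/
def MaxLaminarCuts [NeZero n] (𝓛 : Set (Finset (Fin n))) : Prop :=
  (∀ C ∈ 𝓛, IsCut C) ∧ Laminar 𝓛 ∧
    ∀ C : Finset (Fin n), IsCut C → C ∉ 𝓛 → ¬ Laminar (insert C 𝓛)

/-- An `α`-thin link set. -/
def IsThin [NeZero n] (α : ℕ) (K : Finset (Link n)) : Prop :=
  ∃ 𝓛 : Set (Finset (Fin n)), MaxLaminarCuts 𝓛 ∧ ∀ C ∈ 𝓛, (cutLinks K C).card ≤ α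

/-- The set `𝒳` of festoons connects `v` to a `v`-good vertex. -/
def ConnectsToGood (F : Finset (DLink n)) (v : Fin n)
    (𝒳 : Finset (Finset (Link n))) : Prop :=
  ∃ w : Fin n, VGood F v w ∧ ConnVert (𝒳.biUnion id) v w

/-- The undirected graph obtained from a set of directed links by
disregarding orientations. -/
def undirGraph (F : Finset (DLink n)) : SimpleGraph (Fin n) where
  Adj a b := ∃ d ∈ F, (d.tail = a ∧ d.head = b) ∨ (d.tail = b ∧ d.head = a)
  symm := by
    constructor
    rintro a b ⟨d, hd, h⟩
    exact ⟨d, hd, h.symm⟩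
  loopless := by
    constructor
    rintro a ⟨d, hd, h⟩
    rcases h with ⟨h1, h2⟩ | ⟨h1, h2⟩ <;> exact d.ne (h1.trans h2.symm)

/-- A directed link going to the left along the ring. -/
def LeftGoing (d : DLink n) : Prop := d.head < d.tail

/-- A directed link going to the right along the ring. -/
def RightGoing (d : DLink n) : Prop := d.tail < d.head

/-!
Non-shortenability gives, for every link `d ∈ F` and every vertex `s ≠ d.tail` on its span, a
2-cut containing `s` that `d` alone covers, so every walk from the root into that cut passes
through `d`. Hence every vertex is reachable from the root and the shortest-walk depth strictly
increases along links. A link covering `C` with shallowest tail is responsible for `C`. If two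
links `d₁ ≠ d₂` were responsible for `C`, either the head of one lies on the span of the other,
which makes its tail a descendant of the other's head, or they enter `C` from opposite sides;
then the tail of each is reached from the root only by jumping over `C`, and a deepest link
jumping over `C` leads, through one of them, to a deeper one.
-/

open Finset

section Order

variable {α : Type*} [LinearOrder α] [Fintype α] [LocallyFiniteOrder α]

theorem exists_maximal_Icc_subset (U : Finset α) (hU : U.Nonempty) :
    ∃ a b, a ≤ b ∧ Icc a b ⊆ U ∧ (∀ x ∈ U, a ≤ x) ∧ ∀ t, b < t → ∃ w ∉ U, b < w ∧ w ≤ t := by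
  set a := U.min' hU
  have haU : a ∈ U := U.min'_mem hU
  have hT : (univ.filter fun b => Icc a b ⊆ U).Nonempty := ⟨a, by simpa using haU⟩
  set b := (univ.filter fun b => Icc a b ⊆ U).max' hT
  have hab : Icc a b ⊆ U := by simpa using (univ.filter fun b => Icc a b ⊆ U).max'_mem hT
  refine ⟨a, b, (univ.filter _).le_max' a (by simpa using haU), hab,
    fun x hx => U.min'_le x hx, fun t hbt => ?_⟩
  have hR : (univ.filter (b < ·)).Nonempty := ⟨t, by simpa using hbt⟩
  set w := (univ.filter (b < ·)).min' hR
  have hbw : b < w := (mem_filter.1 ((univ.filter (b < ·)).min'_mem hR)).2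
  refine ⟨w, fun hwU => ?_, hbw, (univ.filter _).min'_le t (by simpa using hbt)⟩
  -- `w` is the successor of `b`, so `Icc a w = insert w (Icc a b)`.
  have haw : Icc a w ⊆ U := by
    intro z hz
    rcases le_or_gt z b with hzb | hbz
    · exact hab (mem_Icc.2 ⟨(mem_Icc.1 hz).1, hzb⟩)
    · have : w ≤ z := (univ.filter _).min'_le z (by simpa using hbz)
      exact le_antisymm (mem_Icc.1 hz).2 this ▸ hwU
  exact absurd ((univ.filter _).le_max' w (by simpa using haw)) (not_le.2 hbw)

end Order

variable {F : Finset (DLink n)}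

theorem Descend.single {d : DLink n} (hd : d ∈ F) : Descend F d.tail d.head :=
  Relation.ReflTransGen.single ⟨d, hd, rfl, rfl⟩

theorem Descend.trans {u v w : Fin n} (huv : Descend F u v) (hvw : Descend F v w) :
    Descend F u w :=
  Relation.ReflTransGen.trans huv hvw

def DescendIn (F : Finset (DLink n)) : ℕ → Fin n → Fin n → Prop
  | 0, u, v => u = v
  | k + 1, u, w => ∃ d ∈ F, DescendIn F k u d.tail ∧ d.head = w

theorem descend_iff_exists_descendIn {u v : Fin n} :
    Descend F u v ↔ ∃ k, DescendIn F k u v := by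
  constructor
  · intro h
    induction h with
    | refl => exact ⟨0, rfl⟩
    | tail _ hstep ih =>
      obtain ⟨d, hd, rfl, rfl⟩ := hstep
      obtain ⟨k, hk⟩ := ih
      exact ⟨k + 1, d, hd, hk, rfl⟩
  · rintro ⟨k, hk⟩
    induction k generalizing v with
    | zero => exact hk ▸ Relation.ReflTransGen.refl
    | succ k ih =>
      obtain ⟨d, hd, hk, rfl⟩ := hk
      exact (ih hk).trans (Descend.single hd)

theorem DescendIn.exists_dCovers {S : Finset (Fin n)} {u : Fin n} (hu : u ∉ S) :
    ∀ {k : ℕ} {v : Fin n}, DescendIn F k u v → v ∈ S →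
      ∃ e ∈ F, DCovers e S ∧ (∃ i < k, DescendIn F i u e.tail) ∧ Descend F e.head v
  | 0, v, (huv : u = v), hv => absurd (huv ▸ hv) hu
  | k + 1, _, ⟨d, hd, hk, rfl⟩, hv => by
    by_cases htail : d.tail ∈ S
    · obtain ⟨e, he, hcov, ⟨i, hi, hie⟩, hdesc⟩ := DescendIn.exists_dCovers hu hk htail
      exact ⟨e, he, hcov, ⟨i, by omega, hie⟩, hdesc.trans (Descend.single hd)⟩
    · exact ⟨d, hd, ⟨htail, hv⟩, ⟨k, by omega, hk⟩, Relation.ReflTransGen.refl⟩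

theorem Descend.exists_dCovers {S : Finset (Fin n)} {u v : Fin n} (h : Descend F u v)
    (hu : u ∉ S) (hv : v ∈ S) :
    ∃ e ∈ F, DCovers e S ∧ Descend F u e.tail ∧ Descend F e.head v := by
  obtain ⟨k, hk⟩ := descend_iff_exists_descendIn.1 h
  obtain ⟨e, he, hcov, ⟨i, -, hi⟩, hdesc⟩ := hk.exists_dCovers hu hv
  exact ⟨e, he, hcov, descend_iff_exists_descendIn.2 ⟨i, hi⟩, hdesc⟩

section NonShortenableSolutions

variable [NeZero n]

theorem IsCut.zero_notMem {C : Finset (Fin n)} (hC : IsCut C) : (0 : Fin n) ∉ C := by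
  obtain ⟨a, b, ha, -, rfl⟩ := hC
  exact fun h => not_le.2 ha (mem_Icc.1 h).1

def UniquelyCovers (F : Finset (DLink n)) (d : DLink n) (B : Finset (Fin n)) : Prop :=
  IsCut B ∧ DCovers d B ∧ ∀ e ∈ F, DCovers e B → e = d

theorem UniquelyCovers.descend_via {d : DLink n} {B : Finset (Fin n)}
    (hB : UniquelyCovers F d B) {u z : Fin n} (h : Descend F u z) (hu : u ∉ B) (hz : z ∈ B) :
    Descend F u d.tail ∧ Descend F d.head z := by
  obtain ⟨e, he, hcov, hue, hez⟩ := h.exists_dCovers hu hz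
  obtain rfl := hB.2.2 e he hcov
  exact ⟨hue, hez⟩

theorem IsDirSolution.exists_uniquelyCovers {d : DLink n} (hF : IsDirSolution F)
    {F' : Finset (DLink n)} (hsub : F.erase d ⊆ F') (hF' : ¬ IsDirSolution F') :
    ∃ B, UniquelyCovers F d B ∧ ∀ e ∈ F', ¬ DCovers e B := by
  simp only [IsDirSolution, not_forall, not_exists, not_and] at hF'
  obtain ⟨B, hB, hnot⟩ := hF'
  have huniq : ∀ e ∈ F, DCovers e B → e = d := fun e he hcov => by
    by_contra hne
    exact hnot e (hsub (mem_erase.2 ⟨hne, he⟩)) hcov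
  obtain ⟨e, he, hcov⟩ := hF B hB
  exact ⟨B, ⟨hB, huniq e he hcov ▸ hcov, huniq⟩, hnot⟩

/-- Deletion-minimality (for `s = d.head`) and shortening-minimality (for the other `s`). -/
theorem NonShortenable.exists_uniquelyCovers (hF : NonShortenable F) {d : DLink n} (hd : d ∈ F)
    {s : Fin n} (hs₁ : min d.tail d.head ≤ s) (hs₂ : s ≤ max d.tail d.head) (hs : s ≠ d.tail) :
    ∃ B, UniquelyCovers F d B ∧ s ∈ B := by
  by_cases hsh : s = d.head
  · obtain ⟨B, hB, -⟩ := hF.1.exists_uniquelyCovers subset_rfl (hF.2.1 d hd)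
    exact ⟨B, hB, hsh ▸ hB.2.1.2⟩
  · set d' : DLink n := ⟨s, d.head, hsh⟩
    have hne : d' ≠ d := fun h => hs (congrArg DLink.tail h)
    obtain ⟨B, hB, hnot⟩ := hF.1.exists_uniquelyCovers (subset_insert d' _)
      (hF.2.2 d hd d' ⟨rfl, hs₁, hs₂⟩ hne)
    refine ⟨B, hB, ?_⟩
    by_contra hsB
    exact hnot d' (mem_insert_self _ _) ⟨hsB, hB.2.1.2⟩

theorem NonShortenable.descend_zero (hF : NonShortenable F) (v : Fin n) : Descend F 0 v := by
  classical
  by_contra hv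
  set U := univ.filter fun u => ¬ Descend F 0 u
  have hmemU : ∀ u, u ∈ U ↔ ¬ Descend F 0 u := by simp [U]
  obtain ⟨a, b, hab, habU, hmin, hsucc⟩ := exists_maximal_Icc_subset U ⟨v, (hmemU v).2 hv⟩
  have ha : 0 < a := by
    refine lt_of_le_of_ne (Fin.zero_le a) fun h0 => ?_
    exact (hmemU a).1 (habU (left_mem_Icc.2 hab)) (h0 ▸ Relation.ReflTransGen.refl)
  obtain ⟨d, hd, htail, hhead⟩ := hF.1 _ ⟨a, b, ha, hab, rfl⟩
  have htailU : d.tail ∈ U := (hmemU _).2 fun h0 =>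
    (hmemU _).1 (habU hhead) (h0.trans (Descend.single hd))
  have hbt : b < d.tail := by
    by_contra h
    exact htail (mem_Icc.2 ⟨hmin _ htailU, not_lt.1 h⟩)
  -- the vertex just right of the unreachable run `[a, b]` is reachable and lies on the span of `d`
  obtain ⟨w, hwU, hbw, hwt⟩ := hsucc d.tail hbt
  have hhw : d.head ≤ w := ((mem_Icc.1 hhead).2.trans_lt hbw).le
  obtain ⟨B, hB, hwB⟩ := hF.exists_uniquelyCovers hd (min_le_right _ _ |>.trans hhw)
    (hwt.trans (le_max_left _ _)) (fun h => hwU (h ▸ htailU))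
  have h0w : Descend F 0 w := by simpa [hmemU] using hwU
  exact (hmemU _).1 htailU (hB.descend_via h0w hB.1.zero_notMem hwB).1

noncomputable def depth (F : Finset (DLink n)) (v : Fin n) : ℕ :=
  sInf {k | DescendIn F k 0 v}

theorem NonShortenable.descendIn_depth (hF : NonShortenable F) (v : Fin n) :
    DescendIn F (depth F v) 0 v :=
  Nat.sInf_mem (descend_iff_exists_descendIn.1 (hF.descend_zero v))

/-- A shortest walk to `d.head` enters a cut uniquely covered by `d`, hence passes through `d`. -/
theorem NonShortenable.depth_tail_lt (hF : NonShortenable F) {d : DLink n} (hd : d ∈ F) :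
    depth F d.tail < depth F d.head := by
  obtain ⟨B, hB, -⟩ :=
    hF.exists_uniquelyCovers hd (min_le_right _ _) (le_max_right _ _) d.ne.symm
  obtain ⟨e, he, hcov, ⟨i, hi, hie⟩, -⟩ :=
    (hF.descendIn_depth d.head).exists_dCovers hB.1.zero_notMem hB.2.1.2
  obtain rfl := hB.2.2 e he hcov
  exact (Nat.sInf_le hie).trans_lt hi

theorem NonShortenable.depth_le (hF : NonShortenable F) {u v : Fin n} (h : Descend F u v) :
    depth F u ≤ depth F v := by
  induction h with
  | refl => exact le_rfl
  | tail _ hstep ih =>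
    obtain ⟨d, hd, rfl, rfl⟩ := hstep
    exact ih.trans (hF.depth_tail_lt hd).le

theorem NonShortenable.descend_of_head_mem_span (hF : NonShortenable F) {j d : DLink n}
    (hj : j ∈ F) (hd : d ∈ F) (hne : d ≠ j) (h₁ : min j.tail j.head ≤ d.head)
    (h₂ : d.head ≤ max j.tail j.head) (h₃ : d.head ≠ j.tail) : Descend F j.head d.tail := by
  obtain ⟨B, hB, hheadB⟩ := hF.exists_uniquelyCovers hj h₁ h₂ h₃
  have htailB : d.tail ∈ B := by
    by_contra htail
    exact hne (hB.2.2 d hd ⟨htail, hheadB⟩)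
  exact (hB.descend_via (hF.descend_zero _) hB.1.zero_notMem htailB).2

theorem NonShortenable.not_descend_tail_of_responsible (hF : NonShortenable F) {d : DLink n}
    {C : Finset (Fin n)} (hr : Responsible F d C) {v : Fin n} (hv : v ∈ C) :
    ¬ Descend F v d.tail := fun hvd => by
  obtain ⟨e, he, hcov, -, hev⟩ := (hF.descend_zero v).exists_dCovers hr.1.zero_notMem hv
  exact hr.2.2 e he (hev.trans hvd) hcov

theorem NonShortenable.exists_responsible (hF : NonShortenable F) {C : Finset (Fin n)}
    (hC : IsCut C) : ∃ d ∈ F, Responsible F d C := by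
  classical
  obtain ⟨d₀, hd₀, hcov₀⟩ := hF.1 C hC
  obtain ⟨d, hd, hmin⟩ := (F.filter (DCovers · C)).exists_min_image (fun d => depth F d.tail)
    ⟨d₀, mem_filter.2 ⟨hd₀, hcov₀⟩⟩
  rw [mem_filter] at hd
  refine ⟨d, hd.1, hC, hd.2, fun d' hd' hdesc hcov' => ?_⟩
  have := hmin d' (mem_filter.2 ⟨hd', hcov'⟩)
  have := hF.depth_le hdesc
  have := hF.depth_tail_lt hd'
  omega

def OppositeSides (a b x y : Fin n) : Prop := (x < a ∧ b < y) ∨ (b < x ∧ y < a)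

theorem NonShortenable.responsible_eq_of_head_mem_span (hF : NonShortenable F)
    {d₁ d₂ : DLink n} {C : Finset (Fin n)} (hd₁ : d₁ ∈ F) (hd₂ : d₂ ∈ F)
    (hr₁ : Responsible F d₁ C) (hr₂ : Responsible F d₂ C) (h₁ : min d₁.tail d₁.head ≤ d₂.head)
    (h₂ : d₂.head ≤ max d₁.tail d₁.head) (h₃ : d₂.head ≠ d₁.tail) : d₂ = d₁ := by
  by_contra hne
  exact hr₂.2.2 d₁ hd₁ (hF.descend_of_head_mem_span hd₁ hd₂ hne h₁ h₂ h₃) hr₁.2.1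

/-- The ancestors of `d.tail` avoid `[a, b]`, so a walk from one side to `d.tail` on the other
side must jump over the cut. -/
theorem NonShortenable.exists_jump (hF : NonShortenable F) {d : DLink n} {a b : Fin n}
    (hr : Responsible F d (Icc a b)) {u : Fin n} (hu : Descend F u d.tail)
    (hside : OppositeSides a b u d.tail) :
    ∃ e ∈ F, OppositeSides a b e.tail e.head ∧ Descend F u e.tail := by
  classical
  have hab : a ≤ b := nonempty_Icc.1 ⟨_, hr.2.1.2⟩
  obtain ⟨e, he, ⟨het, heh⟩, hue, hed⟩ :=
    hu.exists_dCovers (S := univ.filter (OppositeSides a b u))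
    (by simp only [mem_filter, mem_univ, true_and, OppositeSides]; omega)
    (by simpa using hside)
  have hetC : e.tail ∉ Icc a b := fun h =>
    hF.not_descend_tail_of_responsible hr h ((Descend.single he).trans hed)
  refine ⟨e, he, ?_, hue⟩
  simp only [mem_filter, mem_univ, true_and, OppositeSides, mem_Icc] at het heh hetC ⊢
  omega

theorem NonShortenable.exists_deeper_jump (hF : NonShortenable F) {j d : DLink n} {a b : Fin n}
    (hj : j ∈ F) (hjump : OppositeSides a b j.tail j.head) (hd : d ∈ F)
    (hr : Responsible F d (Icc a b)) (hside : OppositeSides a b j.head d.tail) :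
    ∃ e ∈ F, OppositeSides a b e.tail e.head ∧ depth F j.head < depth F e.head := by
  have hhead := mem_Icc.1 hr.2.1.2
  unfold OppositeSides at hjump
  have hne : d ≠ j := by rintro rfl; omega
  have hdesc := hF.descend_of_head_mem_span hj hd hne
    (by simp only [min_le_iff]; omega) (by simp only [le_max_iff]; omega) (by omega)
  obtain ⟨e, he, hejump, hje⟩ := hF.exists_jump hr hdesc hside
  exact ⟨e, he, hejump, (hF.depth_le hje).trans_lt (hF.depth_tail_lt he)⟩

/-- Among the links jumping over `[a, b]`, one with deepest head would admit a deeper one. -/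
theorem NonShortenable.not_responsible_from_both_sides (hF : NonShortenable F)
    {d₁ d₂ : DLink n} {a b : Fin n} (hd₁ : d₁ ∈ F) (hd₂ : d₂ ∈ F)
    (hr₁ : Responsible F d₁ (Icc a b)) (hr₂ : Responsible F d₂ (Icc a b))
    (h₁ : d₁.tail < a) (h₂ : b < d₂.tail) : False := by
  classical
  set T := F.filter fun e => OppositeSides a b e.tail e.head
  have hT : T.Nonempty := by
    have ha : 0 < a := lt_of_le_of_ne (Fin.zero_le a) fun h => hr₁.1.zero_notMem
      (mem_Icc.2 ⟨h.ge, (Fin.zero_le _).trans (mem_Icc.1 hr₁.2.1.2).2⟩)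
    obtain ⟨e, he, hjump, -⟩ := hF.exists_jump hr₂ (hF.descend_zero _) (Or.inl ⟨ha, h₂⟩)
    exact ⟨e, mem_filter.2 ⟨he, hjump⟩⟩
  obtain ⟨j, hjT, hmax⟩ := T.exists_max_image (fun e => depth F e.head) hT
  rw [mem_filter] at hjT
  obtain ⟨e, he, hejump, hlt⟩ :
      ∃ e ∈ F, OppositeSides a b e.tail e.head ∧ depth F j.head < depth F e.head := by
    rcases hjT.2 with ⟨-, hjh⟩ | ⟨-, hjh⟩
    · exact hF.exists_deeper_jump hjT.1 hjT.2 hd₁ hr₁ (Or.inr ⟨hjh, h₁⟩)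
    · exact hF.exists_deeper_jump hjT.1 hjT.2 hd₂ hr₂ (Or.inl ⟨hjh, h₂⟩)
  exact (hmax e (mem_filter.2 ⟨he, hejump⟩)).not_gt hlt

theorem NonShortenable.responsible_unique (hF : NonShortenable F) {d₁ d₂ : DLink n}
    {C : Finset (Fin n)} (hd₁ : d₁ ∈ F) (hd₂ : d₂ ∈ F) (hr₁ : Responsible F d₁ C)
    (hr₂ : Responsible F d₂ C) : d₁ = d₂ := by
  wlog hle : d₁.head ≤ d₂.head generalizing d₁ d₂
  · exact (this hd₂ hd₁ hr₂ hr₁ (le_of_not_ge hle)).symm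
  obtain ⟨a, b, -, -, rfl⟩ := hr₁.1
  have hh₁ := mem_Icc.1 hr₁.2.1.2
  have hh₂ := mem_Icc.1 hr₂.2.1.2
  have ht₁ : d₁.tail < a ∨ b < d₁.tail := by
    have := hr₁.2.1.1; rw [mem_Icc] at this; omega
  have ht₂ : d₂.tail < a ∨ b < d₂.tail := by
    have := hr₂.2.1.1; rw [mem_Icc] at this; omega
  rcases ht₂ with ht₂ | ht₂
  · exact hF.responsible_eq_of_head_mem_span hd₂ hd₁ hr₂ hr₁
      (by simp only [min_le_iff]; omega) (by simp only [le_max_iff]; omega) (by omega)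
  rcases ht₁ with ht₁ | ht₁
  · exact (hF.not_responsible_from_both_sides hd₁ hd₂ hr₁ hr₂ ht₁ ht₂).elim
  · exact (hF.responsible_eq_of_head_mem_span hd₁ hd₂ hr₁ hr₂
      (by simp only [min_le_iff]; omega) (by simp only [le_max_iff]; omega) (by omega)).symm

end NonShortenableSolutions

theorem responsibility_unique_general {n : ℕ}
    (F : Finset (DLink (n + 3))) (hF : NonShortenable F)
    (C : Finset (Fin (n + 3))) (hC : IsCut C) :
    ∃! d : DLink (n + 3), d ∈ F ∧ Responsible F d C := by
  obtain ⟨d, hd, hr⟩ := hF.exists_responsible hC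
  exact ⟨d, ⟨hd, hr⟩, fun e ⟨he, hre⟩ => hF.responsible_unique he hd hre hr⟩

/-- for a non-shortenable directed WRAP solution `F`, every
2-cut `C ∈ C_G` has exactly one directed link of `F` responsible for it
(equivalently, the sets `R_F(ℓ)`, `ℓ ∈ F`, partition `C_G`). -/
theorem responsibility_unique {n : ℕ}
    (L : Finset (Link (n + 3))) (c : Link (n + 3) → ℝ)
    (F : Finset (DLink (n + 3))) (hF : NonShortenable F)
    (C : Finset (Fin (n + 3))) (hC : IsCut C) :
    ∃! d : DLink (n + 3), d ∈ F ∧ Responsible F d C :=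
  responsibility_unique_general F hF C hC
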